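/- Let S be a Hausdorff inverse semigroup with zero and K a commutative unital ring. Then the singular ideal of K₀S equals the tight ideal of K₀S. -/

import Mathlib

/-- An inverse semigroup with zero. -/
class InverseSemigroup0 (S : Type*) extends Semigroup S, Zero S, Star S where
  zero_mul : ∀ s : S, 0 * s = 0
  mul_zero : ∀ s : S, s * 0 = 0
  mul_star_mul_self : ∀ s : S, s * star s * s = s
  star_mul_self_star : ∀ s : S, star s * s * star s = star s
  star_unique : ∀ s t : S, s * t * s = s → t * s * t = t → t = star s

/-- The natural partial order on an inverse semigroup. -/
def NatLe {S : Type*} [InverseSemigroup0 S] (a b : S) : Prop := a = b * star a * a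

variable (K S : Type*) [CommRing K] [InverseSemigroup0 S]

/-- The ring congruence on the semigroup algebra identifying the zero of `S`
with the zero of the algebra. -/
noncomputable def contractedCon : RingCon (MonoidAlgebra K S) :=
  ringConGen (fun a b => a = MonoidAlgebra.single (0 : S) (1 : K) ∧ b = 0)

/-- The contracted semigroup algebra `K₀S`: the `K`-algebra with basis `S \ {0}`
and multiplication extending that of `S`, realized as the quotient of the semigroup
algebra of `S` by the span of the zero of `S`. -/
abbrev Kzero := (contractedCon K S).Quotient

/-- The quotient map onto the contracted semigroup algebra. -/
noncomputable def mk0 (a : MonoidAlgebra K S) : Kzero K S :=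
  (a : (contractedCon K S).Quotient)

/-- The canonical map `S → K₀S`. -/
noncomputable def iota (s : S) : Kzero K S := mk0 K S (MonoidAlgebra.single s 1)

/-- An element of `K₀S` is singular if for every non-zero idempotent `e` there is a
non-zero idempotent `f ≤ e` with `a f = 0`. -/
noncomputable def Singular (x : Kzero K S) : Prop :=
  ∀ e : S, IsIdempotentElem e → e ≠ 0 →
    ∃ f : S, IsIdempotentElem f ∧ f ≠ 0 ∧ NatLe f e ∧ x * iota K S f = 0

/-- `J` is a two-sided ideal of the (non-unital) ring `K₀S`. -/
def IsIdealSet (J : Set (Kzero K S)) : Prop :=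
  (0 : Kzero K S) ∈ J ∧ (∀ a ∈ J, ∀ b ∈ J, a + b ∈ J) ∧ (∀ a ∈ J, -a ∈ J) ∧
    ∀ a ∈ J, ∀ x : Kzero K S, x * a ∈ J ∧ a * x ∈ J

/-- Iterated join `a₁ ∨ ⋯ ∨ aₙ` of (commuting) idempotents in a ring,
where `a ∨ b = a + b - a * b`. -/
noncomputable def joinList : List (Kzero K S) → Kzero K S
  | [] => 0
  | a :: l => a + joinList l - a * joinList l

/-- `F` is a cover of the idempotent `e` by non-zero idempotents below `e`:
every non-zero idempotent below `e` meets some member of `F`. -/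
def IsCover (e : S) (F : List S) : Prop :=
  (∀ f ∈ F, IsIdempotentElem f ∧ f ≠ 0 ∧ NatLe f e) ∧
    ∀ h : S, IsIdempotentElem h → h ≠ 0 → NatLe h e → ∃ f ∈ F, h * f ≠ 0

/-- The generators `e - ⋁ F` (for `F` a cover of the non-zero idempotent `e`)
of the tight ideal of `K₀S`. -/
noncomputable def TightGen : Set (Kzero K S) :=
  {x | ∃ (e : S) (F : List S), IsIdempotentElem e ∧ e ≠ 0 ∧ IsCover S e F ∧
        x = iota K S e - joinList K S (F.map (iota K S))}

/-- The tight ideal of `K₀S`: the two-sided ideal generated by the elements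
`e - ⋁ F` with `F` a cover of `e`. -/
noncomputable def TightIdealSet : Set (Kzero K S) :=
  ⋂₀ {J : Set (Kzero K S) | IsIdealSet K S J ∧ TightGen K S ⊆ J}

/-- An inverse semigroup is Hausdorff if for all `s, t` the order ideal `s↓ ∩ t↓`
is finitely generated. -/
def HausdorffIS (S : Type*) [InverseSemigroup0 S] : Prop :=
  ∀ s t : S, ∃ F : Finset S,
    {x : S | NatLe x s ∧ NatLe x t} = {x : S | ∃ f ∈ F, NatLe x f}

/-!
Tight elements are singular: the singular elements form an ideal (the only non-obvious closure
property is right multiplication by `t ∈ S`, where an idempotent annihilating `a` below the range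
of `t e` is pulled back along `t e`), and below any non-zero idempotent `h` a generator `e - ⋁ F`
annihilates either `h` itself (if `e h = 0`) or `h f ≠ 0` for the `f ∈ F` given by the cover
property.

Conversely, let `x` be singular. Hausdorffness provides a finite set `Ω ⊇ supp x` closed under
restrictions `u ↦ u w⁻¹w` in which every meet `u↓ ∩ v↓` is finitely generated. For `s₀` maximal
in the support of `x`, the generators `w ≠ 0` of the meets of `s₀` with the other support elements
yield a cover `{w⁻¹w}` of `s₀⁻¹s₀` (this is where singularity of `x` enters), and subtracting the
tight element `x_{s₀} s₀ (s₀⁻¹s₀ - ⋁ w⁻¹w)` trades `s₀` for elements of `Ω` strictly below it.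
Induction on the number of elements of `Ω` below the support concludes.
-/

namespace InverseSemigroup0

variable {S}

instance : SemigroupWithZero S where
  zero_mul := InverseSemigroup0.zero_mul
  mul_zero := InverseSemigroup0.mul_zero

lemma mul_star_mul_self' (s : S) : s * (star s * s) = s := by
  rw [← mul_assoc, mul_star_mul_self]

lemma isIdempotentElem_star_mul_self (s : S) : IsIdempotentElem (star s * s) := by
  rw [IsIdempotentElem, ← mul_assoc, star_mul_self_star]

lemma isIdempotentElem_mul_star_self (s : S) : IsIdempotentElem (s * star s) := by
  rw [IsIdempotentElem, ← mul_assoc, mul_star_mul_self]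

lemma star_eq_self_of_isIdempotentElem {e : S} (he : IsIdempotentElem e) : star e = e :=
  (star_unique e e (by rw [he.eq, he.eq]) (by rw [he.eq, he.eq])).symm

instance : InvolutiveStar S where
  star_involutive s := (star_unique (star s) s (star_mul_self_star s) (mul_star_mul_self s)).symm

/-- `x := star (e * f)` satisfies `f * x * e = x`, hence is idempotent, hence self-inverse:
`e * f = star x = x`. -/
lemma isIdempotentElem_mul {e f : S} (he : IsIdempotentElem e) (hf : IsIdempotentElem f) :
    IsIdempotentElem (e * f) := by
  set x := star (e * f)
  have h₁ : e * f * x * (e * f) = e * f := mul_star_mul_self (e * f)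
  have h₂ : x * (e * f) * x = x := star_mul_self_star (e * f)
  have hfxe : f * x * e = x := by
    refine star_unique (e * f) (f * x * e) ?_ ?_
    · calc e * f * (f * x * e) * (e * f) = e * ((f * f) * (x * ((e * e) * f))) := by
            simp only [mul_assoc]
        _ = e * f * x * (e * f) := by rw [he.eq, hf.eq]; simp only [mul_assoc]
        _ = e * f := h₁
    · calc f * x * e * (e * f) * (f * x * e) = f * ((x * ((e * e) * ((f * f) * x))) * e) := by
            simp only [mul_assoc]
        _ = f * ((x * (e * f) * x) * e) := by rw [he.eq, hf.eq]; simp only [mul_assoc]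
        _ = f * x * e := by rw [h₂, mul_assoc]
  have hxx : IsIdempotentElem x := by
    calc x * x = f * (x * (e * f) * x) * e := by
          conv_lhs => rw [← hfxe]
          simp only [mul_assoc]
      _ = x := by rw [h₂, hfxe]
  have hx : e * f = x := by
    simpa [x] using star_eq_self_of_isIdempotentElem hxx
  rw [hx]
  exact hxx

lemma commute_of_isIdempotentElem {e f : S} (he : IsIdempotentElem e) (hf : IsIdempotentElem f) :
    Commute e f := by
  have hef := isIdempotentElem_mul he hf
  have hfe := isIdempotentElem_mul hf he
  have h := star_unique (e * f) (f * e) ?_ ?_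
  · rw [Commute, SemiconjBy, ← star_eq_self_of_isIdempotentElem hef, h]
  · calc e * f * (f * e) * (e * f) = e * ((f * f) * ((e * e) * f)) := by simp only [mul_assoc]
      _ = e * f := by rw [he.eq, hf.eq, ← mul_assoc, hef.eq]
  · calc f * e * (e * f) * (f * e) = f * ((e * e) * ((f * f) * e)) := by simp only [mul_assoc]
      _ = f * e := by rw [he.eq, hf.eq, ← mul_assoc, hfe.eq]

instance : StarMul S where
  star_mul s t := by
    have hc : Commute (t * star t) (star s * s) :=
      commute_of_isIdempotentElem (isIdempotentElem_mul_star_self t)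
        (isIdempotentElem_star_mul_self s)
    refine (star_unique (s * t) (star t * star s) ?_ ?_).symm
    · calc s * t * (star t * star s) * (s * t) = s * ((t * star t) * (star s * s) * t) := by
            simp only [mul_assoc]
        _ = (s * star s * s) * (t * star t * t) := by rw [hc.eq]; simp only [mul_assoc]
        _ = s * t := by rw [mul_star_mul_self, mul_star_mul_self]
    · calc star t * star s * (s * t) * (star t * star s)
          = star t * ((star s * s) * (t * star t)) * star s := by simp only [mul_assoc]
        _ = (star t * t * star t) * (star s * s * star s) := by
          rw [← hc.eq]; simp only [mul_assoc]
        _ = star t * star s := by rw [star_mul_self_star, star_mul_self_star]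

lemma star_mul_self_mul {e : S} (u : S) (he : IsIdempotentElem e) :
    star (u * e) * (u * e) = star u * u * e := by
  have hc := commute_of_isIdempotentElem (isIdempotentElem_star_mul_self u) he
  calc star (u * e) * (u * e) = e * ((star u * u) * e) := by
        rw [star_mul, star_eq_self_of_isIdempotentElem he]; simp only [mul_assoc]
    _ = star u * u * e := by rw [← mul_assoc, ← hc.eq, mul_assoc, he.eq]

lemma natLe_iff_exists {a b : S} : NatLe a b ↔ ∃ e, IsIdempotentElem e ∧ a = b * e := by
  constructor
  · intro h
    exact ⟨star a * a, isIdempotentElem_star_mul_self a, by rw [← mul_assoc]; exact h⟩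
  · rintro ⟨e, he, rfl⟩
    have hc := commute_of_isIdempotentElem (isIdempotentElem_star_mul_self b) he
    calc b * e = b * (star b * b) * (e * e) := by rw [mul_star_mul_self', he.eq]
      _ = b * (e * (star b * b) * e) := by rw [← hc.eq]; simp only [mul_assoc]
      _ = b * star (b * e) * (b * e) := by
        rw [star_mul, star_eq_self_of_isIdempotentElem he]; simp only [mul_assoc]

instance : PartialOrder S where
  le := NatLe
  le_refl a := (mul_star_mul_self a).symm
  le_trans a b c hab hbc := by
    obtain ⟨e, he, rfl⟩ := natLe_iff_exists.1 hab
    obtain ⟨f, hf, rfl⟩ := natLe_iff_exists.1 hbc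
    exact natLe_iff_exists.2 ⟨f * e, isIdempotentElem_mul hf he, by rw [mul_assoc]⟩
  le_antisymm a b hab hba := by
    obtain ⟨e, he, ha⟩ := natLe_iff_exists.1 hab
    obtain ⟨f, hf, hb⟩ := natLe_iff_exists.1 hba
    have key : a = a * (f * e) := by rw [← mul_assoc, ← hb, ← ha]
    have haf : a * f = a := by
      calc a * f = a * (f * (e * f)) := by nth_rewrite 1 [key]; simp only [mul_assoc]
        _ = a := by
          rw [(commute_of_isIdempotentElem he hf).eq, ← mul_assoc f, hf.eq, ← key]
    rw [hb, haf]

lemma le_iff_exists_isIdempotentElem {a b : S} : a ≤ b ↔ ∃ e, IsIdempotentElem e ∧ a = b * e :=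
  natLe_iff_exists

lemma eq_mul_star_mul_self_of_le {a b : S} (h : a ≤ b) : a = b * (star a * a) := by
  rw [← mul_assoc]; exact h

lemma mul_le_of_isIdempotentElem (a : S) {e : S} (he : IsIdempotentElem e) : a * e ≤ a :=
  le_iff_exists_isIdempotentElem.2 ⟨e, he, rfl⟩

lemma eq_zero_of_le_zero {a : S} (h : a ≤ 0) : a = 0 := by
  obtain ⟨e, -, rfl⟩ := le_iff_exists_isIdempotentElem.1 h
  exact zero_mul e

lemma le_iff_mul_eq_of_isIdempotentElem {e f : S} (he : IsIdempotentElem e)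
    (hf : IsIdempotentElem f) : f ≤ e ↔ e * f = f := by
  rw [le_iff_exists_isIdempotentElem]
  constructor
  · rintro ⟨g, -, rfl⟩
    rw [← mul_assoc, he.eq]
  · exact fun h => ⟨f, hf, h.symm⟩

lemma star_mul_self_le_star_mul_self {a b : S} (h : a ≤ b) : star a * a ≤ star b * b := by
  obtain ⟨e, he, rfl⟩ := le_iff_exists_isIdempotentElem.1 h
  rw [star_mul_self_mul b he]
  exact mul_le_of_isIdempotentElem _ he

lemma le_mul_star_mul_self {x y z : S} (hx : z ≤ x) (hy : z ≤ y) : z ≤ x * (star y * y) := by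
  obtain ⟨g, hg, hzg⟩ := le_iff_exists_isIdempotentElem.1 (star_mul_self_le_star_mul_self hy)
  refine le_iff_exists_isIdempotentElem.2 ⟨g, hg, ?_⟩
  rw [mul_assoc, ← hzg]
  exact eq_mul_star_mul_self_of_le hx

lemma mul_star_mul_self_le {x y t : S} (hx : x ≤ t) (hy : y ≤ t) : x * (star y * y) ≤ y := by
  obtain ⟨e, he, rfl⟩ := le_iff_exists_isIdempotentElem.1 hx
  have hc := commute_of_isIdempotentElem he (isIdempotentElem_star_mul_self y)
  rw [mul_assoc, hc.eq, ← mul_assoc, ← eq_mul_star_mul_self_of_le hy]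
  exact mul_le_of_isIdempotentElem y he

lemma star_mul_self_mul_of_le {s g : S} (hg : IsIdempotentElem g) (h : g ≤ star s * s) :
    star (s * g) * (s * g) = g := by
  rw [star_mul_self_mul s hg]
  exact (le_iff_mul_eq_of_isIdempotentElem (isIdempotentElem_star_mul_self s) hg).1 h

lemma mul_le_of_isIdempotentElem_left {e : S} (he : IsIdempotentElem e) (a : S) : e * a ≤ a := by
  refine le_iff_exists_isIdempotentElem.2 ⟨star (e * a) * (e * a),
    isIdempotentElem_star_mul_self _, ?_⟩
  have hc := commute_of_isIdempotentElem he (isIdempotentElem_mul_star_self a)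
  rw [star_mul, star_eq_self_of_isIdempotentElem he]
  calc e * a = e * (a * star a) * a := by rw [mul_assoc, mul_star_mul_self]
    _ = a * star a * (e * e) * a := by rw [hc.eq, he.eq]
    _ = a * (star a * e * (e * a)) := by simp only [mul_assoc]

def IsMeetClosed (Ω : Set S) : Prop :=
  ∀ u ∈ Ω, ∀ v ∈ Ω, ∃ M : Finset S, ↑M ⊆ Ω ∧ ∀ y, y ≤ u ∧ y ≤ v ↔ ∃ w ∈ M, y ≤ w

/-- `u * (star w * w)` is the restriction of `u` to the domain of `w`. -/
def IsRestrictionClosed (Ω : Set S) : Prop :=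
  ∀ u ∈ Ω, ∀ w ∈ Ω, u * (star w * w) ∈ Ω

lemma le_and_le_iff_of_le {u v t t' : S} (hu : u ≤ t) (hv : v ≤ t') {F : Finset S}
    (hF : ∀ x, x ≤ t ∧ x ≤ t' ↔ ∃ f ∈ F, x ≤ f) (y : S) :
    y ≤ u ∧ y ≤ v ↔ ∃ f ∈ F, y ≤ u * (star f * f) * (star v * v) := by
  constructor
  · rintro ⟨hyu, hyv⟩
    obtain ⟨f, hf, hyf⟩ := (hF y).1 ⟨hyu.trans hu, hyv.trans hv⟩
    exact ⟨f, hf, le_mul_star_mul_self (le_mul_star_mul_self hyu hyf) hyv⟩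
  · rintro ⟨f, hf, hy⟩
    obtain ⟨hft, hft'⟩ := (hF f).2 ⟨f, hf, le_rfl⟩
    have hwu : u * (star f * f) * (star v * v) ≤ u :=
      (mul_le_of_isIdempotentElem _ (isIdempotentElem_star_mul_self v)).trans
        (mul_le_of_isIdempotentElem u (isIdempotentElem_star_mul_self f))
    have hwv : u * (star f * f) * (star v * v) ≤ v :=
      mul_star_mul_self_le ((mul_star_mul_self_le hu hft).trans hft') hv
    exact ⟨hy.trans hwu, hy.trans hwv⟩

lemma exists_finset_meet_generators {Ω : Set S} (hΩ : IsMeetClosed Ω) {s : S} (hs : s ∈ Ω)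
    (T : Finset S) (hT : ↑T ⊆ Ω) :
    ∃ W : Finset S, ↑W ⊆ Ω ∧ (∀ w ∈ W, w ≠ 0 ∧ w ≤ s ∧ ∃ t ∈ T, w ≤ t) ∧
      ∀ t ∈ T, ∀ z, z ≠ 0 → z ≤ s → z ≤ t → ∃ w ∈ W, z ≤ w := by
  choose! M hMΩ hM using fun t (ht : t ∈ T) => hΩ s hs t (hT ht)
  classical
  refine ⟨(T.biUnion M).filter (· ≠ 0), fun w hw => ?_, fun w hw => ?_, ?_⟩
  · obtain ⟨t, ht, hwt⟩ := Finset.mem_biUnion.1 (Finset.mem_filter.1 hw).1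
    exact hMΩ t ht hwt
  · obtain ⟨hwM, hw0⟩ := Finset.mem_filter.1 hw
    obtain ⟨t, ht, hwt⟩ := Finset.mem_biUnion.1 hwM
    obtain ⟨hws, hwt⟩ := (hM t ht w).2 ⟨w, hwt, le_rfl⟩
    exact ⟨hw0, hws, t, ht, hwt⟩
  · intro t ht z hz0 hzs hzt
    obtain ⟨w, hwM, hzw⟩ := (hM t ht z).1 ⟨hzs, hzt⟩
    refine ⟨w, Finset.mem_filter.2 ⟨Finset.mem_biUnion.2 ⟨t, ht, hwM⟩, ?_⟩, hzw⟩
    rintro rfl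
    exact hz0 (eq_zero_of_le_zero hzw)

section Restrictions

variable [DecidableEq S]

def restrictions (T : Finset S) : List S → Finset S
  | [] => T
  | a :: L => restrictions T L ∪ (restrictions T L).image (· * a)

lemma subset_restrictions (T : Finset S) (L : List S) : T ⊆ restrictions T L := by
  induction L with
  | nil => exact subset_rfl
  | cons a L ih => exact ih.trans Finset.subset_union_left

lemma restrictions_induction {T : Finset S} {L : List S} {P : S → Prop} (hT : ∀ t ∈ T, P t)
    (hmul : ∀ u a, P u → a ∈ L → P (u * a)) : ∀ u ∈ restrictions T L, P u := by
  induction L with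
  | nil => exact hT
  | cons a L ih =>
    have ih' := ih fun u b hu hb => hmul u b hu (List.mem_cons_of_mem a hb)
    intro u hu
    rcases Finset.mem_union.1 hu with hu | hu
    · exact ih' u hu
    · obtain ⟨v, hv, rfl⟩ := Finset.mem_image.1 hu
      exact hmul v a (ih' v hv) List.mem_cons_self

lemma mul_mem_restrictions {T : Finset S} {L : List S} (hL : ∀ a ∈ L, IsIdempotentElem a)
    {u a : S} (hu : u ∈ restrictions T L) (ha : a ∈ L) : u * a ∈ restrictions T L := by
  induction L generalizing u with
  | nil => simp at ha
  | cons b L ih =>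
    have ih' := @ih fun c hc => hL c (List.mem_cons_of_mem b hc)
    have hb := hL b List.mem_cons_self
    simp only [restrictions, Finset.mem_union, Finset.mem_image] at hu ⊢
    rcases List.mem_cons.1 ha with rfl | ha <;> rcases hu with hu | ⟨v, hv, rfl⟩
    · exact Or.inr ⟨u, hu, rfl⟩
    · exact Or.inr ⟨v, hv, by rw [mul_assoc, hb.eq]⟩
    · exact Or.inl (ih' hu ha)
    · refine Or.inr ⟨v * a, ih' hv ha, ?_⟩
      have ha' := hL a (List.mem_cons_of_mem b ha)
      rw [mul_assoc, mul_assoc, (commute_of_isIdempotentElem ha' hb).eq]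

lemma exists_le_of_mem_restrictions {T : Finset S} {L : List S} (hL : ∀ a ∈ L, IsIdempotentElem a)
    {u : S} (hu : u ∈ restrictions T L) : ∃ t ∈ T, u ≤ t :=
  restrictions_induction (P := fun u => ∃ t ∈ T, u ≤ t) (fun t ht => ⟨t, ht, le_rfl⟩)
    (fun u a ⟨t, ht, hut⟩ ha => ⟨t, ht, (mul_le_of_isIdempotentElem u (hL a ha)).trans hut⟩) u hu

lemma isRestrictionClosed_restrictions {T : Finset S} {L : List S}
    (hL : ∀ a ∈ L, IsIdempotentElem a) (hTL : ∀ t ∈ T, star t * t ∈ L) :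
    IsRestrictionClosed (restrictions T L : Set S) := by
  intro u hu w hw
  revert u
  refine restrictions_induction (P := fun w => ∀ u ∈ restrictions T L, u * (star w * w) ∈ _)
    (fun t ht u hu => mul_mem_restrictions hL hu (hTL t ht)) ?_ w hw
  intro w a hw ha u hu
  rw [star_mul_self_mul w (hL a ha), ← mul_assoc]
  exact mul_mem_restrictions hL (hw u hu) ha

end Restrictions

end InverseSemigroup0

open InverseSemigroup0 hiding zero_mul mul_zero


variable {K S}

theorem HausdorffIS.exists_closed_finset_superset (hH : HausdorffIS S) (T : Finset S) :
    ∃ Ω : Finset S, T ⊆ Ω ∧ IsMeetClosed (Ω : Set S) ∧ IsRestrictionClosed (Ω : Set S) := by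
  classical
  choose F hF using hH
  have hF' : ∀ s t x, x ≤ s ∧ x ≤ t ↔ ∃ f ∈ F s t, x ≤ f := fun s t => Set.ext_iff.1 (hF s t)
  set L := ((T ∪ T.biUnion fun t => T.biUnion (F t)).image fun w => star w * w).toList
  have hL : ∀ a ∈ L, IsIdempotentElem a := by
    simp only [L, Finset.mem_toList, Finset.mem_image]
    rintro _ ⟨w, -, rfl⟩
    exact isIdempotentElem_star_mul_self w
  have hmemL : ∀ w ∈ T ∪ T.biUnion (fun t => T.biUnion (F t)), star w * w ∈ L := fun w hw =>
    Finset.mem_toList.2 (Finset.mem_image_of_mem _ hw)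
  have hres := isRestrictionClosed_restrictions hL fun t ht => hmemL t (Finset.mem_union_left _ ht)
  refine ⟨restrictions T L, subset_restrictions T L, ?_, hres⟩
  intro u hu v hv
  obtain ⟨t, ht, hut⟩ := exists_le_of_mem_restrictions hL hu
  obtain ⟨t', ht', hvt'⟩ := exists_le_of_mem_restrictions hL hv
  refine ⟨(F t t').image fun f => u * (star f * f) * (star v * v), ?_, fun y => ?_⟩
  · intro w hw
    obtain ⟨f, hf, rfl⟩ := Finset.mem_image.1 hw
    refine hres _ (mul_mem_restrictions hL hu (hmemL f ?_)) v hv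
    exact Finset.mem_union_right _
      (Finset.mem_biUnion.2 ⟨t, ht, Finset.mem_biUnion.2 ⟨t', ht', hf⟩⟩)
  · rw [le_and_le_iff_of_le hut hvt' (hF' t t'), Finset.exists_mem_image]

noncomputable def zeroSpan : TwoSidedIdeal (MonoidAlgebra K S) := by
  classical
  exact TwoSidedIdeal.mk' {a | a.coeff.support ⊆ {0}} (by simp)
    (fun ha hb => Finsupp.support_add.trans (Finset.union_subset ha hb))
    (fun ha => by simpa [MonoidAlgebra.coeff_neg] using ha)
    (fun {x y} hy => (MonoidAlgebra.support_coeff_mul_subset x y).trans fun s hs => by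
      obtain ⟨u, -, v, hv, rfl⟩ := Finset.mem_mul.1 hs
      rw [Finset.mem_singleton.1 (hy hv), mul_zero]; exact Finset.mem_singleton_self 0)
    (fun {x y} hx => (MonoidAlgebra.support_coeff_mul_subset x y).trans fun s hs => by
      obtain ⟨u, hu, v, -, rfl⟩ := Finset.mem_mul.1 hs
      rw [Finset.mem_singleton.1 (hx hu), zero_mul]; exact Finset.mem_singleton_self 0)

lemma mem_zeroSpan_iff (a : MonoidAlgebra K S) : a ∈ zeroSpan ↔ a.coeff.support ⊆ {0} := by
  classical
  exact TwoSidedIdeal.mem_mk' ..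

lemma single_zero_mem_zeroSpan (k : K) : MonoidAlgebra.single (0 : S) k ∈ zeroSpan := by
  rw [mem_zeroSpan_iff, MonoidAlgebra.coeff_single]
  exact Finsupp.support_single_subset

lemma contractedCon_eq_zeroSpan : contractedCon K S = zeroSpan.ringCon := by
  apply le_antisymm
  · refine RingCon.ringConGen_le.2 ?_
    rintro a b ⟨rfl, rfl⟩
    rw [TwoSidedIdeal.rel_iff, sub_zero]
    exact single_zero_mem_zeroSpan 1
  · intro a b h
    rw [TwoSidedIdeal.rel_iff, mem_zeroSpan_iff, Finsupp.support_subset_singleton'] at h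
    obtain ⟨k, hk⟩ := h
    have hz : contractedCon K S (a - b) 0 := by
      have := (contractedCon K S).mul (RingCon.refl _ (MonoidAlgebra.single (0 : S) k))
        (RingConGen.Rel.of _ _ ⟨rfl, rfl⟩ : contractedCon K S (MonoidAlgebra.single 0 1) 0)
      rwa [MonoidAlgebra.single_mul_single, mul_zero, mul_one, mul_zero,
        ← MonoidAlgebra.coeff_injective (hk.trans (MonoidAlgebra.coeff_single 0 k).symm)] at this
    simpa using (contractedCon K S).add hz (RingCon.refl _ b)

@[simp] lemma mk0_zero : mk0 K S 0 = 0 := RingCon.coe_zero _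

lemma mk0_add (a b : MonoidAlgebra K S) : mk0 K S (a + b) = mk0 K S a + mk0 K S b :=
  RingCon.coe_add _ a b

lemma mk0_sub (a b : MonoidAlgebra K S) : mk0 K S (a - b) = mk0 K S a - mk0 K S b :=
  RingCon.coe_sub _ a b

lemma mk0_mul (a b : MonoidAlgebra K S) : mk0 K S (a * b) = mk0 K S a * mk0 K S b :=
  RingCon.coe_mul _ a b

lemma mk0_surjective : Function.Surjective (mk0 K S) := Quotient.mk''_surjective

lemma mk0_eq_zero_iff (a : MonoidAlgebra K S) : mk0 K S a = 0 ↔ a.coeff.support ⊆ {0} := by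
  rw [← mk0_zero, mk0, mk0, RingCon.eq, contractedCon_eq_zeroSpan, TwoSidedIdeal.rel_iff,
    sub_zero, mem_zeroSpan_iff]

lemma iota_zero : iota K S 0 = 0 :=
  (mk0_eq_zero_iff _).2 Finsupp.support_single_subset

lemma mk0_single_mul_iota (u : S) (c : K) (v : S) :
    mk0 K S (MonoidAlgebra.single u c) * iota K S v = mk0 K S (MonoidAlgebra.single (u * v) c) := by
  rw [iota, ← mk0_mul, MonoidAlgebra.single_mul_single, mul_one]

lemma iota_mul (u v : S) : iota K S u * iota K S v = iota K S (u * v) :=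
  mk0_single_mul_iota u 1 v

lemma mul_mk0_single_eq_zero {a : Kzero K S} {u : S} (h : a * iota K S u = 0) (c : K) :
    a * mk0 K S (MonoidAlgebra.single u c) = 0 := by
  rw [← mul_star_mul_self' u, ← one_mul c, ← MonoidAlgebra.single_mul_single, mk0_mul,
    ← mul_assoc, ← iota, h, zero_mul]

lemma joinList_mul_eq_zero {L : List (Kzero K S)} {y : Kzero K S} (h : ∀ a ∈ L, a * y = 0) :
    joinList K S L * y = 0 := by
  induction L with
  | nil => exact zero_mul y
  | cons a L ih =>
    rw [joinList, sub_mul, add_mul, mul_assoc, ih fun b hb => h b (List.mem_cons_of_mem a hb),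
      h a List.mem_cons_self, mul_zero, add_zero, sub_zero]

lemma commute_joinList {a : Kzero K S} {L : List (Kzero K S)} (h : ∀ b ∈ L, Commute a b) :
    Commute a (joinList K S L) := by
  induction L with
  | nil => exact Commute.zero_right a
  | cons b L ih =>
    have hb := h b List.mem_cons_self
    have hL := ih fun c hc => h c (List.mem_cons_of_mem b hc)
    exact ((hb.add_right hL).sub_right (hb.mul_right hL))

lemma joinList_mul_eq_self {L : List (Kzero K S)} {y : Kzero K S}
    (hL : ∀ a ∈ L, ∀ b ∈ L, Commute a b) (h : ∃ a ∈ L, a * y = y) : joinList K S L * y = y := by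
  induction L with
  | nil => simp at h
  | cons a L ih =>
    rw [joinList, sub_mul, add_mul, mul_assoc]
    obtain ⟨b, hb, hby⟩ := h
    rcases List.mem_cons.1 hb with rfl | hb
    · have hc : Commute b (joinList K S L) :=
        commute_joinList fun c hc => hL b List.mem_cons_self c (List.mem_cons_of_mem b hc)
      rw [← mul_assoc, hc.eq, mul_assoc, hby, add_sub_cancel_right]
    · rw [ih (fun c hc d hd => hL c (List.mem_cons_of_mem a hc) d (List.mem_cons_of_mem a hd))
        ⟨b, hb, hby⟩, add_sub_cancel_left]

lemma singular_zero : Singular K S 0 :=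
  fun e he he0 => ⟨e, he, he0, (le_refl e : e ≤ e), zero_mul _⟩

lemma Singular.add {a b : Kzero K S} (ha : Singular K S a) (hb : Singular K S b) :
    Singular K S (a + b) := by
  intro e he he0
  obtain ⟨f, hf, hf0, hfe, haf⟩ := ha e he he0
  obtain ⟨g, hg, hg0, hgf, hbg⟩ := hb f hf hf0
  have hfg : iota K S g = iota K S f * iota K S g := by
    rw [iota_mul, (le_iff_mul_eq_of_isIdempotentElem hf hg).1 hgf]
  exact ⟨g, hg, hg0, le_trans (α := S) hgf hfe,
    by rw [add_mul, hbg, hfg, ← mul_assoc, haf, zero_mul, add_zero]⟩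

lemma Singular.neg {a : Kzero K S} (ha : Singular K S a) : Singular K S (-a) := by
  intro e he he0
  obtain ⟨f, hf, hf0, hfe, haf⟩ := ha e he he0
  exact ⟨f, hf, hf0, hfe, by rw [neg_mul a, haf, neg_zero]⟩

lemma Singular.sub {a b : Kzero K S} (ha : Singular K S a) (hb : Singular K S b) :
    Singular K S (a - b) :=
  sub_eq_add_neg a b ▸ ha.add hb.neg

lemma Singular.mul_left {a : Kzero K S} (ha : Singular K S a) (x : Kzero K S) :
    Singular K S (x * a) := by
  intro e he he0
  obtain ⟨f, hf, hf0, hfe, haf⟩ := ha e he he0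
  exact ⟨f, hf, hf0, hfe, by rw [mul_assoc, haf, mul_zero]⟩

/-- With `u := t * e`, an idempotent `f'' ≤ u * star u` killed by `a` is pulled back along `u`:
for `w := f'' * u`, the idempotent `star w * w` lies below `e` and `t * (star w * w) = w`. -/
lemma Singular.mul_iota {a : Kzero K S} (ha : Singular K S a) (t : S) :
    Singular K S (a * iota K S t) := by
  intro e he he0
  by_cases hte : t * e = 0
  · exact ⟨e, he, he0, (le_refl e : e ≤ e), by rw [mul_assoc, iota_mul, hte, iota_zero, mul_zero]⟩
  set u := t * e
  have hg := isIdempotentElem_mul_star_self u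
  have hg0 : u * star u ≠ 0 := fun h => hte (by rw [← mul_star_mul_self u, h, zero_mul])
  obtain ⟨f'', hf'', hf''0, hf''g, haf''⟩ := ha _ hg hg0
  set w := f'' * u
  have hwu : w ≤ u := mul_le_of_isIdempotentElem_left hf'' u
  have hw0 : w ≠ 0 := by
    intro hw
    apply hf''0
    rw [← (le_iff_mul_eq_of_isIdempotentElem hg hf'').1 hf''g,
      (commute_of_isIdempotentElem hg hf'').eq, ← mul_assoc]
    exact (congrArg (· * star u) hw).trans (zero_mul _)
  have hfe : star w * w ≤ e :=
    (star_mul_self_le_star_mul_self hwu).trans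
      (star_mul_self_mul t he ▸
        mul_le_of_isIdempotentElem_left (isIdempotentElem_star_mul_self t) e)
  have htf : t * (star w * w) = f'' * u := by
    rw [← (le_iff_mul_eq_of_isIdempotentElem he (isIdempotentElem_star_mul_self w)).1 hfe,
      ← mul_assoc, ← eq_mul_star_mul_self_of_le hwu]
  refine ⟨star w * w, isIdempotentElem_star_mul_self w, fun h => hw0 ?_, hfe, ?_⟩
  · rw [← mul_star_mul_self' w, h, mul_zero]
  · rw [mul_assoc, iota_mul, htf, ← iota_mul, ← mul_assoc, haf'', zero_mul]

lemma Singular.mul_right {a : Kzero K S} (ha : Singular K S a) (x : Kzero K S) :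
    Singular K S (a * x) := by
  obtain ⟨r, rfl⟩ := mk0_surjective x
  induction r using MonoidAlgebra.induction_linear with
  | zero => simpa using singular_zero
  | add p q hp hq => rw [mk0_add, mul_add]; exact hp.add hq
  | single t c =>
    intro e he he0
    obtain ⟨f, hf, hf0, hfe, haf⟩ := ha.mul_iota t e he he0
    refine ⟨f, hf, hf0, hfe, ?_⟩
    rw [mul_assoc, mk0_single_mul_iota]
    exact mul_mk0_single_eq_zero (by rwa [mul_assoc, iota_mul] at haf) c

lemma isIdealSet_singular : IsIdealSet K S {x | Singular K S x} :=
  ⟨singular_zero, fun _ ha _ hb => ha.add hb, fun _ ha => ha.neg,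
    fun _ ha x => ⟨ha.mul_left x, ha.mul_right x⟩⟩

lemma zero_mem_tightIdealSet : (0 : Kzero K S) ∈ TightIdealSet K S :=
  Set.mem_sInter.2 fun _ hJ => hJ.1.1

lemma tightGen_subset_tightIdealSet : TightGen K S ⊆ TightIdealSet K S :=
  fun _ hx => Set.mem_sInter.2 fun _ hJ => hJ.2 hx

lemma add_mem_tightIdealSet {a b : Kzero K S} (ha : a ∈ TightIdealSet K S)
    (hb : b ∈ TightIdealSet K S) : a + b ∈ TightIdealSet K S :=
  Set.mem_sInter.2 fun J hJ => hJ.1.2.1 a (Set.mem_sInter.1 ha J hJ) b (Set.mem_sInter.1 hb J hJ)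

lemma mul_mem_tightIdealSet {a : Kzero K S} (x : Kzero K S) (ha : a ∈ TightIdealSet K S) :
    x * a ∈ TightIdealSet K S :=
  Set.mem_sInter.2 fun J hJ => (hJ.1.2.2.2 a (Set.mem_sInter.1 ha J hJ) x).1

lemma iota_commute_iota {e f : S} (he : IsIdempotentElem e) (hf : IsIdempotentElem f) :
    Commute (iota K S e) (iota K S f) := by
  rw [Commute, SemiconjBy, iota_mul, iota_mul, (commute_of_isIdempotentElem he hf).eq]

lemma tightGen_subset_singular : TightGen K S ⊆ {x | Singular K S x} := by
  rintro _ ⟨e, F, he, -, ⟨hF, hcover⟩, rfl⟩ h hh hh0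
  have hef : ∀ f ∈ F, e * f = f := fun f hf =>
    (le_iff_mul_eq_of_isIdempotentElem he (hF f hf).1).1 (hF f hf).2.2
  by_cases heh : e * h = 0
  · refine ⟨h, hh, hh0, (le_refl h : h ≤ h), ?_⟩
    rw [sub_mul, iota_mul, heh, iota_zero, zero_sub, neg_eq_zero]
    refine joinList_mul_eq_zero ?_
    simp only [List.mem_map]
    rintro _ ⟨f, hf, rfl⟩
    rw [iota_mul, ← hef f hf, mul_assoc, (commute_of_isIdempotentElem (hF f hf).1 hh).eq,
      ← mul_assoc, heh, zero_mul, iota_zero]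
  · have hehe : e * h ≤ e :=
      (commute_of_isIdempotentElem he hh).eq ▸ mul_le_of_isIdempotentElem_left hh e
    obtain ⟨f, hfF, hf⟩ := hcover (e * h) (isIdempotentElem_mul he hh) heh hehe
    have hf' := (hF f hfF).1
    have hehf : e * h * f = h * f := by
      rw [(commute_of_isIdempotentElem he hh).eq, mul_assoc, hef f hfF]
    have hjoin : joinList K S (F.map (iota K S)) * iota K S (h * f) = iota K S (h * f) := by
      refine joinList_mul_eq_self ?_ ⟨iota K S f, List.mem_map_of_mem hfF, ?_⟩
      · simp only [List.mem_map]
        rintro _ ⟨f₁, hf₁, rfl⟩ _ ⟨f₂, hf₂, rfl⟩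
        exact iota_commute_iota (hF f₁ hf₁).1 (hF f₂ hf₂).1
      · rw [iota_mul, ← mul_assoc, (commute_of_isIdempotentElem hf' hh).eq, mul_assoc, hf'.eq]
    refine ⟨h * f, isIdempotentElem_mul hh hf', hehf ▸ hf, mul_le_of_isIdempotentElem h hf', ?_⟩
    rw [sub_mul, iota_mul, ← mul_assoc, hehf, hjoin, sub_self]

lemma tightIdealSet_subset_singular : TightIdealSet K S ⊆ {x | Singular K S x} :=
  Set.sInter_subset_of_mem ⟨isIdealSet_singular, tightGen_subset_singular⟩

def supportedIn (B : Set S) : AddSubgroup (Kzero K S) where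
  carrier := {x | ∃ r : MonoidAlgebra K S, mk0 K S r = x ∧ ↑r.coeff.support ⊆ B}
  zero_mem' := ⟨0, mk0_zero, by simp⟩
  add_mem' := by
    rintro _ _ ⟨p, rfl, hp⟩ ⟨q, rfl, hq⟩
    classical
    exact ⟨p + q, mk0_add p q, (Finset.coe_subset.2 Finsupp.support_add).trans
      (by simpa using Set.union_subset hp hq)⟩
  neg_mem' := by
    rintro _ ⟨p, rfl, hp⟩
    exact ⟨-p, RingCon.coe_neg _ p, by simpa [MonoidAlgebra.coeff_neg] using hp⟩

lemma mk0_single_mem_supportedIn {B : Set S} {v : S} (hv : v ∈ B) (c : K) :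
    mk0 K S (MonoidAlgebra.single v c) ∈ supportedIn B :=
  ⟨_, rfl, (Finset.coe_subset.2 Finsupp.support_single_subset).trans (by simpa using hv)⟩

/-- Expanding the join, `v * ⋁ᵢ star wᵢ * wᵢ` is a signed sum of iterated restrictions of `v`,
each of them below some `wᵢ`. -/
lemma mk0_single_mul_joinList_mem_supportedIn {Ω : Set S} (hΩ : IsRestrictionClosed Ω)
    {s₀ : S} {ws : List S} (hws : ∀ w ∈ ws, w ∈ Ω ∧ w < s₀) {v : S} (hv : v ∈ Ω) (hvs : v ≤ s₀)
    (c : K) :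
    mk0 K S (MonoidAlgebra.single v c) *
        joinList K S ((ws.map fun w => star w * w).map (iota K S)) ∈
      supportedIn {u | u ∈ Ω ∧ u < s₀} := by
  induction ws generalizing v with
  | nil => simp [joinList]
  | cons w ws ih =>
    have ih' := @ih fun w' hw' => hws w' (List.mem_cons_of_mem w hw')
    obtain ⟨hwΩ, hws₀⟩ := hws w List.mem_cons_self
    have hvw : v * (star w * w) ≤ w := mul_star_mul_self_le hvs hws₀.le
    simp only [List.map_cons, joinList]
    rw [mul_sub, mul_add, ← mul_assoc, mk0_single_mul_iota]
    exact sub_mem (add_mem (mk0_single_mem_supportedIn (B := {u | u ∈ Ω ∧ u < s₀})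
      ⟨hΩ v hv w hwΩ, hvw.trans_lt hws₀⟩ c)
      (ih' hv hvs)) (ih' (hΩ v hv w hwΩ) (hvw.trans hws₀.le))

/-- If a non-zero idempotent `h ≤ star s₀ * s₀` were orthogonal to every `star w * w`, singularity
would give `0 ≠ g ≤ h` with `r * g = 0`. But the coefficient of `r * g` at `s₀ * g ≠ 0` is that of
`r` at `s₀`: another `t` in the support with `t * g = s₀ * g` would force `g ≤ star w * w` for
some `w`. -/
lemma isCover_of_singular {r : MonoidAlgebra K S} (hr : Singular K S (mk0 K S r)) {s₀ : S}
    (hs₀ : s₀ ∈ r.coeff.support) {ws : List S} (hws : ∀ w ∈ ws, w ≠ 0 ∧ w ≤ s₀)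
    (hmeet : ∀ t ∈ r.coeff.support, t ≠ s₀ → ∀ z, z ≠ 0 → z ≤ s₀ → z ≤ t → ∃ w ∈ ws, z ≤ w) :
    IsCover S (star s₀ * s₀) (ws.map fun w => star w * w) := by
  refine ⟨?_, fun h hh hh0 hhs₀ => ?_⟩
  · simp only [List.mem_map]
    rintro _ ⟨w, hw, rfl⟩
    exact ⟨isIdempotentElem_star_mul_self w,
      fun h0 => (hws w hw).1 (by rw [← mul_star_mul_self' w, h0, mul_zero]),
      star_mul_self_le_star_mul_self (hws w hw).2⟩
  by_contra! hcon
  obtain ⟨g, hg, hg0, hgh, hrg⟩ := hr h hh hh0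
  have hgs₀ : g ≤ star s₀ * s₀ := le_trans (α := S) hgh hhs₀
  have hz0 : s₀ * g ≠ 0 := fun h0 =>
    hg0 (by rw [← star_mul_self_mul_of_le hg hgs₀, h0, mul_zero])
  have hcoeff : (r * MonoidAlgebra.single g 1).coeff (s₀ * g) = 0 := by
    rw [← Finsupp.notMem_support_iff]
    intro hmem
    exact hz0 (Finset.mem_singleton.1 ((mk0_eq_zero_iff _).1 (by rwa [mk0_mul]) hmem))
  rw [MonoidAlgebra.coeff_mul_single_eq_coeff_mul s₀, mul_one] at hcoeff
  · exact Finsupp.mem_support_iff.1 hs₀ hcoeff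
  intro t ht
  refine ⟨fun htg => ?_, fun hts => hts ▸ rfl⟩
  by_contra hts
  obtain ⟨w, hw, hzw⟩ := hmeet t ht hts (s₀ * g) hz0 (mul_le_of_isIdempotentElem s₀ hg)
    (htg ▸ mul_le_of_isIdempotentElem t hg)
  have hgw : g ≤ star w * w :=
    star_mul_self_mul_of_le hg hgs₀ ▸ star_mul_self_le_star_mul_self hzw
  apply hg0
  rw [← (le_iff_mul_eq_of_isIdempotentElem (isIdempotentElem_star_mul_self w) hg).1 hgw,
    ← (le_iff_mul_eq_of_isIdempotentElem hh hg).1 hgh, ← mul_assoc,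
    ← (commute_of_isIdempotentElem hh (isIdempotentElem_star_mul_self w)).eq,
    hcon _ (List.mem_map_of_mem hw), zero_mul]

noncomputable def supportDownset (Ω : Finset S) (r : MonoidAlgebra K S) : Finset S := by
  classical
  exact Ω.filter fun w => ∃ s ∈ r.coeff.support, s ≠ 0 ∧ w ≤ s

lemma mem_supportDownset {Ω : Finset S} {r : MonoidAlgebra K S} {w : S} :
    w ∈ supportDownset Ω r ↔ w ∈ Ω ∧ ∃ s ∈ r.coeff.support, s ≠ 0 ∧ w ≤ s := by
  classical
  exact Finset.mem_filter

lemma card_supportDownset_lt {Ω : Finset S} {r r' : MonoidAlgebra K S} {s₀ : S} (hs₀Ω : s₀ ∈ Ω)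
    (hs₀ : s₀ ∈ r.coeff.support) (hs₀0 : s₀ ≠ 0)
    (hmax : ∀ t ∈ r.coeff.support, t ≠ 0 → s₀ ≤ t → t = s₀)
    (hr' : ∀ s ∈ r'.coeff.support, s ∈ r.coeff.support ∧ s ≠ s₀ ∨ s < s₀) :
    (supportDownset Ω r').card < (supportDownset Ω r).card := by
  refine Finset.card_lt_card ((Finset.ssubset_iff_of_subset fun w hw => ?_).2
    ⟨s₀, mem_supportDownset.2 ⟨hs₀Ω, s₀, hs₀, hs₀0, le_rfl⟩, fun hmem => ?_⟩)
  · obtain ⟨hwΩ, s, hs, hs0, hws⟩ := mem_supportDownset.1 hw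
    refine mem_supportDownset.2 ⟨hwΩ, ?_⟩
    rcases hr' s hs with ⟨hs', -⟩ | hss₀
    · exact ⟨s, hs', hs0, hws⟩
    · exact ⟨s₀, hs₀, hs₀0, hws.trans hss₀.le⟩
  · obtain ⟨-, s, hs, hs0, hs₀s⟩ := mem_supportDownset.1 hmem
    rcases hr' s hs with ⟨hs', hss₀⟩ | hss₀
    · exact hss₀ (hmax s hs' hs0 hs₀s)
    · exact lt_irrefl s₀ (hs₀s.trans_lt hss₀)

lemma mem_support_sub_single_add {r n : MonoidAlgebra K S} {s₀ s : S}
    (hn : s₀ ∉ n.coeff.support)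
    (hs : s ∈ (r - MonoidAlgebra.single s₀ (r.coeff s₀) + n).coeff.support) :
    s ∈ r.coeff.support ∧ s ≠ s₀ ∨ s ∈ n.coeff.support := by
  rw [Finsupp.notMem_support_iff] at hn
  simp only [Finsupp.mem_support_iff, MonoidAlgebra.coeff_add, MonoidAlgebra.coeff_sub,
    MonoidAlgebra.coeff_single, Finsupp.add_apply, Finsupp.sub_apply] at *
  by_cases hss₀ : s = s₀
  · subst hss₀; simp [hn] at hs
  · rw [Finsupp.single_eq_of_ne hss₀, sub_zero] at hs
    by_cases hr : r.coeff s = 0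
    · exact Or.inr (by simpa [hr] using hs)
    · exact Or.inl ⟨hr, hss₀⟩

/-- Subtracting the tight element `c s₀ (star s₀ * s₀ - ⋁ star w * w)`, where `c` is the coefficient
of `r` at `s₀` and `w` runs over generators of the meets of `s₀` with the rest of the support,
removes `s₀` from `r` at the cost of elements of `Ω` strictly below `s₀`. -/
lemma exists_tight_reduction {Ω : Finset S} (hmeet : IsMeetClosed (Ω : Set S))
    (hres : IsRestrictionClosed (Ω : Set S)) {r : MonoidAlgebra K S}
    (hrΩ : ↑r.coeff.support ⊆ (Ω : Set S)) (hr : Singular K S (mk0 K S r)) {s₀ : S}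
    (hs₀ : s₀ ∈ r.coeff.support) (hs₀0 : s₀ ≠ 0)
    (hmax : ∀ t ∈ r.coeff.support, t ≠ 0 → s₀ ≤ t → t = s₀) :
    ∃ n : MonoidAlgebra K S, ↑n.coeff.support ⊆ {u | u ∈ (Ω : Set S) ∧ u < s₀} ∧
      mk0 K S (MonoidAlgebra.single s₀ (r.coeff s₀)) - mk0 K S n ∈ TightIdealSet K S := by
  classical
  have hs₀Ω := hrΩ hs₀
  obtain ⟨W, hWΩ, hW, hWmeet⟩ := exists_finset_meet_generators hmeet hs₀Ω
    (r.coeff.support.erase s₀) ((Finset.coe_subset.2 (Finset.erase_subset _ _)).trans hrΩ)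
  have hWlt : ∀ w ∈ W.toList, w ∈ (Ω : Set S) ∧ w < s₀ := by
    intro w hw
    obtain ⟨hw0, hws₀, t, ht, hwt⟩ := hW w (Finset.mem_toList.1 hw)
    obtain ⟨hts₀, ht⟩ := Finset.mem_erase.1 ht
    refine ⟨hWΩ (Finset.mem_toList.1 hw),
      lt_of_le_of_ne hws₀ fun h => hts₀ (hmax t ht ?_ (h ▸ hwt))⟩
    rintro rfl
    exact hw0 (eq_zero_of_le_zero hwt)
  have hcover := isCover_of_singular hr hs₀ (ws := W.toList)
    (fun w hw => ⟨(hW w (Finset.mem_toList.1 hw)).1, (hW w (Finset.mem_toList.1 hw)).2.1⟩)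
    (fun t ht hts z hz0 hzs hzt => by
      obtain ⟨w, hw, hzw⟩ := hWmeet t (Finset.mem_erase.2 ⟨hts, ht⟩) z hz0 hzs hzt
      exact ⟨w, Finset.mem_toList.2 hw, hzw⟩)
  have hgen : iota K S (star s₀ * s₀) -
      joinList K S ((W.toList.map fun w => star w * w).map (iota K S)) ∈ TightGen K S :=
    ⟨_, _, isIdempotentElem_star_mul_self s₀,
      fun h => hs₀0 (by rw [← mul_star_mul_self' s₀, h, mul_zero]), hcover, rfl⟩
  obtain ⟨n, hn, hnB⟩ :=
    mk0_single_mul_joinList_mem_supportedIn hres hWlt hs₀Ω le_rfl (r.coeff s₀)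
  refine ⟨n, hnB, ?_⟩
  have := mul_mem_tightIdealSet (mk0 K S (MonoidAlgebra.single s₀ (r.coeff s₀)))
    (tightGen_subset_tightIdealSet hgen)
  rwa [mul_sub, mk0_single_mul_iota, mul_star_mul_self', ← hn] at this

theorem mem_tightIdealSet_of_singular {Ω : Finset S} (hmeet : IsMeetClosed (Ω : Set S))
    (hres : IsRestrictionClosed (Ω : Set S)) (r : MonoidAlgebra K S)
    (hrΩ : ↑r.coeff.support ⊆ (Ω : Set S)) (hr : Singular K S (mk0 K S r)) :
    mk0 K S r ∈ TightIdealSet K S := by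
  induction hm : (supportDownset Ω r).card using Nat.strong_induction_on generalizing r with
  | _ m ih =>
  classical
  by_cases hr0 : r.coeff.support ⊆ {0}
  · rw [(mk0_eq_zero_iff r).2 hr0]
    exact zero_mem_tightIdealSet
  obtain ⟨s₀, hs₀, hs₀max⟩ := Finset.exists_maximal (s := r.coeff.support.erase 0) (by
    rw [Finset.subset_singleton_iff', not_forall] at hr0
    obtain ⟨s, hs⟩ := hr0
    exact ⟨s, Finset.mem_erase.2 (Classical.not_imp.1 hs).symm⟩)
  obtain ⟨hs₀0, hs₀⟩ := Finset.mem_erase.1 hs₀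
  have hmax : ∀ t ∈ r.coeff.support, t ≠ 0 → s₀ ≤ t → t = s₀ := fun t ht ht0 hst =>
    le_antisymm (hs₀max (Finset.mem_erase.2 ⟨ht0, ht⟩) hst) hst
  obtain ⟨n, hnB, hq⟩ := exists_tight_reduction hmeet hres hrΩ hr hs₀ hs₀0 hmax
  set r' := r - MonoidAlgebra.single s₀ (r.coeff s₀) + n
  have hsupp : ∀ s ∈ r'.coeff.support, s ∈ r.coeff.support ∧ s ≠ s₀ ∨ s ∈ (Ω : Set S) ∧ s < s₀ :=
    fun s hs => (mem_support_sub_single_add (fun h => lt_irrefl s₀ (hnB h).2) hs).imp_right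
      fun h => hnB h
  have hdecomp : mk0 K S r = mk0 K S r' +
      (mk0 K S (MonoidAlgebra.single s₀ (r.coeff s₀)) - mk0 K S n) := by
    simp only [r', mk0_add, mk0_sub]
    abel
  rw [hdecomp] at hr ⊢
  refine add_mem_tightIdealSet (ih _ ?_ r' ?_ ?_ rfl) hq
  · exact hm ▸ card_supportDownset_lt (hrΩ hs₀) hs₀ hs₀0 hmax fun s hs =>
      (hsupp s hs).imp_right And.right
  · intro s hs
    rcases hsupp s hs with ⟨h, -⟩ | ⟨h, -⟩
    exacts [hrΩ h, h]
  · simpa using hr.sub (tightIdealSet_subset_singular hq)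

/-- For a Hausdorff inverse semigroup with zero, the singular ideal of `K₀S`
coincides with the tight ideal, over any commutative unital ring `K`. -/
theorem stmt10 (K S : Type*) [CommRing K] [InverseSemigroup0 S] (hH : HausdorffIS S) :
    {x : Kzero K S | Singular K S x} = TightIdealSet K S := by
  refine subset_antisymm (fun x hx => ?_) tightIdealSet_subset_singular
  obtain ⟨r, rfl⟩ := mk0_surjective x
  obtain ⟨Ω, hrΩ, hmeet, hres⟩ := hH.exists_closed_finset_superset r.coeff.support
  exact mem_tightIdealSet_of_singular hmeet hres r (Finset.coe_subset.2 hrΩ) hx
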